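/- arXiv:1810.05290 — 3 statements merged into one kernel-verified Lean document; each statement's English description precedes it below -/
import Mathlib

section
/- The estimator ℓ̂ defined by ℓ̂_i = [𝟙(ỹ=y)/p_ỹ]·𝟙(y≠i)·𝟙(ŷ≠i) + [𝟙(ỹ=ŷ)/p_ỹ]·𝟙(ŷ≠y)·𝟙(ŷ=i) is an unbiased estimator of the zero-one loss vector: for each coordinate i, E_{ỹ∼p}[ℓ̂_i] = 𝟙(y≠i). -/
/-!
Each of the two terms of `ℓ̂_i` is an importance-weighted indicator: the weight `1 / p ỹ` cancels
the probability of the single label at which it is nonzero, so its expectation is the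
deterministic factor multiplying it. What remains is the identity
`𝟙(y ≠ i) 𝟙(ŷ ≠ i) + 𝟙(ŷ ≠ y) 𝟙(ŷ = i) = 𝟙(y ≠ i)`, checked by cases on whether `ŷ = i`.
-/

theorem Fintype.sum_mul_ite_one_div_mul {α K : Type*} [Fintype α] [DecidableEq α] [Field K]
    (p : α → K) {a : α} (ha : p a ≠ 0) (c : K) :
    ∑ j, p j * ((if j = a then 1 / p j else 0) * c) = c := by
  simp_rw [ite_mul, zero_mul, mul_ite, mul_zero]
  rw [Fintype.sum_ite_eq']
  field_simp

theorem stmt_0_general (k : ℕ) (y yhat : Fin k) (p : Fin k → ℝ)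
    (hp : ∀ j, 0 < p j) (i : Fin k) :
    ∑ ytil : Fin k, p ytil *
      ((if ytil = y then 1 / p ytil else 0) * (if y ≠ i then 1 else 0) *
          (if yhat ≠ i then 1 else 0) +
        (if ytil = yhat then 1 / p ytil else 0) * (if yhat ≠ y then 1 else 0) *
          (if yhat = i then 1 else 0)) = (if y ≠ i then 1 else 0) := by
  simp_rw [mul_add, Finset.sum_add_distrib, mul_assoc (if _ = _ then _ else _),
    Fintype.sum_mul_ite_one_div_mul p (hp _).ne']
  by_cases hyhat : yhat = i
  · subst hyhat
    simp [ne_comm]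
  · simp [hyhat]

/-- The estimator ℓ̂ from (4) is an unbiased estimator of the zero-one loss vector. -/
theorem stmt_0 (k : ℕ) (hk : 2 ≤ k) (y yhat : Fin k) (p : Fin k → ℝ)
    (hp : ∀ j, 0 < p j) (hsum : ∑ j, p j = 1) (i : Fin k) :
    ∑ ytil : Fin k, p ytil *
      ((if ytil = y then 1 / p ytil else 0) * (if y ≠ i then 1 else 0) *
          (if yhat ≠ i then 1 else 0) +
        (if ytil = yhat then 1 / p ytil else 0) * (if yhat ≠ y then 1 else 0) *
          (if yhat = i then 1 else 0)) = (if y ≠ i then 1 else 0) :=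
  stmt_0_general k y yhat p hp i
end

section
/- Suppose p ∈ Δ_k satisfies p_ŷ = 1−ρ and p_j = ρ/(k−1) for j ≠ ŷ, where 0 < ρ ≤ (k−1)/k. Then the estimator ℓ̂ from Lemma (unbiasedness) satisfies ‖ℓ̂ − E[ℓ̂]‖_∞ ≤ k/ρ almost surely, i.e., ℓ̂ is (k/ρ)-bounded. -/
set_option maxHeartbeats 1000000 in
/-- With the exploration distribution, the estimator ℓ̂ is (k/ρ)-bounded. -/
theorem stmt_2 (k : ℕ) (hk : 2 ≤ k) (y yhat : Fin k) (ρ : ℝ)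
    (hρ0 : 0 < ρ) (hρ1 : ρ ≤ ((k : ℝ) - 1) / k)
    (p : Fin k → ℝ)
    (hp : ∀ j, p j = if j = yhat then 1 - ρ else ρ / ((k : ℝ) - 1)) :
    ∀ ytil i : Fin k,
      |((if ytil = y then 1 / p ytil else 0) * (if y ≠ i then 1 else 0) *
            (if yhat ≠ i then 1 else 0) +
          (if ytil = yhat then 1 / p ytil else 0) * (if yhat ≠ y then 1 else 0) *
            (if yhat = i then 1 else 0)) -
        (if y ≠ i then 1 else 0)| ≤ (k : ℝ) / ρ := by
  have hk2 : (2:ℝ) ≤ (k:ℝ) := by exact_mod_cast hk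
  have hkpos : (0:ℝ) < k := by linarith
  have hρk : ρ * k ≤ (k:ℝ) - 1 := (le_div_iff₀ hkpos).mp hρ1
  have hρlt : ρ < 1 := lt_of_le_of_lt hρ1 (by rw [div_lt_one hkpos]; linarith)
  have hA : (0:ℝ) < 1 - ρ := by linarith
  have hkA : (1:ℝ) ≤ (1 - ρ) * k := by nlinarith
  have hinv1 : 1 / (1 - ρ) ≤ (k:ℝ) / ρ := by
    have h1 : 1 / (1 - ρ) ≤ (k:ℝ) := by rw [div_le_iff₀ hA]; linarith
    have h2 : (k:ℝ) ≤ k / ρ := by rw [le_div_iff₀ hρ0]; nlinarith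
    linarith
  have hB : (0:ℝ) < ρ / ((k:ℝ) - 1) := div_pos hρ0 (by linarith)
  have hinv2 : 1 / (ρ / ((k:ℝ) - 1)) ≤ (k:ℝ) / ρ := by
    rw [one_div_div, div_le_div_iff₀ hρ0 hρ0]
    nlinarith
  have hpos1 : (0:ℝ) ≤ 1 / (1 - ρ) := by positivity
  have hpos2 : (0:ℝ) ≤ 1 / (ρ / ((k:ℝ) - 1)) := le_of_lt (by positivity)
  have hkr : (1:ℝ) ≤ (k:ℝ) / ρ := by
    rw [le_div_iff₀ hρ0]; linarith
  intro ytil i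
  rw [hp ytil]
  split_ifs <;>
    simp only [mul_one, mul_zero, one_mul, zero_mul, add_zero, zero_add, sub_zero,
      zero_sub, abs_neg, abs_one, abs_zero] <;>
    first
      | linarith
      | positivity
      | (rw [abs_le]; constructor <;> linarith)
end

section
/- If A, B ≥ 0, B − A = γ ∈ [−1, 1], and A + B ≤ 1, then min over α ∈ [−2, 2] of A(e^α − 1) + B(e^{−α} − 1) is at most −γ²/2. -/
open Real

/- With γ = B - A and s = A + B, the expression at α = γ equals s (cosh γ - 1) - γ sinh γ,
which for s ≤ 1 is at most cosh γ - 1 - γ sinh γ. That is ≤ -γ²/2 for every real γ: the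
difference x sinh x - cosh x + 1 - x²/2 is even, vanishes at 0, and has derivative
x (cosh x - 1) ≥ 0 for x ≥ 0. -/

theorem Real.sq_div_two_le_mul_sinh_sub_cosh_add_one (x : ℝ) :
    x ^ 2 / 2 ≤ x * sinh x - cosh x + 1 := by
  set g : ℝ → ℝ := fun x ↦ x * sinh x - cosh x + 1 - x ^ 2 / 2 with hg
  have hderiv (x : ℝ) : HasDerivAt g (x * (cosh x - 1)) x := by
    have h := ((((hasDerivAt_id x).mul (hasDerivAt_sinh x)).sub (hasDerivAt_cosh x)).add_const 1).sub
      ((hasDerivAt_pow 2 x).div_const 2)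
    refine (h.congr_deriv ?_).congr_of_eventuallyEq (.of_forall fun y ↦ ?_)
    · simp only [id, Nat.cast_ofNat]
      ring
    · rfl
  have hmono : MonotoneOn g (Set.Ici 0) := by
    refine monotoneOn_of_hasDerivWithinAt_nonneg (convex_Ici 0)
      (fun y _ ↦ (hderiv y).continuousAt.continuousWithinAt)
      (fun y _ ↦ (hderiv y).hasDerivWithinAt) fun y hy ↦ ?_
    rw [interior_Ici] at hy
    exact mul_nonneg hy.le (sub_nonneg.2 (one_le_cosh y))
  have hg0 : g 0 = 0 := by simp [hg]
  have heven : g |x| = g x := by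
    rcases abs_choice x with h | h <;> simp [hg, h]
  have hg_nonneg := hmono Set.self_mem_Ici (abs_nonneg x) (abs_nonneg x)
  rw [hg0, heven, hg] at hg_nonneg
  linarith

theorem mul_exp_sub_one_add_mul_exp_neg_sub_one_le {A B : ℝ} (hAB : A + B ≤ 1) :
    A * (exp (B - A) - 1) + B * (exp (-(B - A)) - 1) ≤ -(B - A) ^ 2 / 2 := by
  set γ := B - A
  have hcosh : (A + B) * (cosh γ - 1) - γ * sinh γ
      = A * (exp γ - 1) + B * (exp (-γ) - 1) := by
    rw [cosh_eq, sinh_eq]; ring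
  have hscale : (A + B) * (cosh γ - 1) ≤ cosh γ - 1 :=
    mul_le_of_le_one_left (sub_nonneg.2 (one_le_cosh γ)) hAB
  linarith [sq_div_two_le_mul_sinh_sub_cosh_add_one γ]

theorem stmt_4_general (A B γ : ℝ) (hγ : B - A = γ)
    (hγ1 : -1 ≤ γ) (hγ2 : γ ≤ 1) (hAB : A + B ≤ 1) :
    ∃ α ∈ Set.Icc (-2 : ℝ) 2,
      A * (Real.exp α - 1) + B * (Real.exp (-α) - 1) ≤ -γ ^ 2 / 2 := by
  subst hγ
  exact ⟨B - A, ⟨by linarith, by linarith⟩, mul_exp_sub_one_add_mul_exp_neg_sub_one_le hAB⟩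

/-- If A, B ≥ 0, B − A = γ ∈ [−1,1] and A + B ≤ 1, then some α ∈ [−2,2] makes
A(e^α − 1) + B(e^{−α} − 1) ≤ −γ²/2. -/
theorem stmt_4 (A B γ : ℝ) (hA : 0 ≤ A) (hB : 0 ≤ B) (hγ : B - A = γ)
    (hγ1 : -1 ≤ γ) (hγ2 : γ ≤ 1) (hAB : A + B ≤ 1) :
    ∃ α ∈ Set.Icc (-2 : ℝ) 2,
      A * (Real.exp α - 1) + B * (Real.exp (-α) - 1) ≤ -γ ^ 2 / 2 :=
  stmt_4_general A B γ hγ hγ1 hγ2 hAB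
end
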